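/- arXiv:1107.2894 — 4 statements merged into one kernel-verified Lean document; each statement's English description precedes it below -/
import Mathlib

section
/- For every non-crossing partition π of {1,…,n} there exists a unique interval partition ρ of {1,…,n} such that π ≪ ρ. -/
/-- Non-crossing predicate for a partition of `{0,…,n-1}` (representing `{1,…,n}`). -/
def IsNC {n : ℕ} (π : Finpartition (Finset.univ : Finset (Fin n))) : Prop :=
  ∀ a b c d : Fin n, a < b → b < c → c < d →
    ∀ V ∈ π.parts, ∀ W ∈ π.parts, a ∈ V → c ∈ V → b ∈ W → d ∈ W → V = W

/-- Interval-partition predicate: every block is an interval of consecutive integers. -/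
def IsIntv {n : ℕ} (π : Finpartition (Finset.univ : Finset (Fin n))) : Prop :=
  ∀ V ∈ π.parts, ∀ a ∈ V, ∀ c ∈ V, ∀ b : Fin n, a ≤ b → b ≤ c → b ∈ V

/-- The relation `π ≪ ρ`: `π ≤ ρ` in the reverse refinement order, and every block `W` of `ρ`
contains a block `V` of `π` with `min W, max W ∈ V`. -/
def Ll {n : ℕ} (π ρ : Finpartition (Finset.univ : Finset (Fin n))) : Prop :=
  π ≤ ρ ∧ ∀ W ∈ ρ.parts, ∃ V ∈ π.parts, ∀ hW : W.Nonempty, W.min' hW ∈ V ∧ W.max' hW ∈ V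

/-!
Call `k` a cut of a partition when no block has elements both `≤ k` and `> k`. If `π ≤ ρ`, every
cut of `ρ` is a cut of `π`; if every block of `ρ` has its minimum and maximum in one block of `π`,
every cut of `π` is a cut of `ρ`. So `π ≪ ρ` forces `ρ` to have exactly the cuts of `π`, and an
interval partition is determined by its cuts. For existence, cut `{1,…,n}` into intervals at the
cuts of `π`. If such an interval starts at `m`, the maximum `M` of the block of `π` through `m` is
again a cut: a block straddling `M` would cross the block of `m`. Hence `M` ends the interval.
-/

open Finset

namespace Finpartition

theorem ext_of_part_eq {α : Type*} [DecidableEq α] {s : Finset α} {P Q : Finpartition s}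
    (h : ∀ a, P.part a = Q.part a) : P = Q := by
  suffices key : ∀ P Q : Finpartition s, (∀ a, P.part a = Q.part a) → P.parts ⊆ Q.parts from
    Finpartition.ext (subset_antisymm (key P Q h) (key Q P fun a => (h a).symm))
  intro P Q h t ht
  obtain ⟨a, ha⟩ := P.nonempty_of_mem_parts ht
  rw [← P.part_eq_of_mem ht ha, h]
  exact Q.part_mem.2 (P.le ht ha)

variable {n : ℕ} {π ρ : Finpartition (univ : Finset (Fin n))}

def cuts (π : Finpartition (univ : Finset (Fin n))) : Set (Fin n) :=
  {k | ∀ V ∈ π.parts, ∀ a ∈ V, ∀ b ∈ V, a ≤ k → b ≤ k}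

theorem le_iff_le_of_mem_cuts {k : Fin n} (hk : k ∈ π.cuts) {V : Finset (Fin n)}
    (hV : V ∈ π.parts) {a b : Fin n} (ha : a ∈ V) (hb : b ∈ V) : a ≤ k ↔ b ≤ k :=
  ⟨hk V hV a ha b hb, hk V hV b hb a ha⟩

theorem cuts_anti (h : π ≤ ρ) : ρ.cuts ⊆ π.cuts := by
  intro k hk V hV a ha b hb
  obtain ⟨W, hW, hVW⟩ := h hV
  exact hk W hW a (hVW ha) b (hVW hb)

theorem cuts_subset_of_min'_max'_mem
    (h : ∀ W ∈ ρ.parts, ∃ V ∈ π.parts, ∀ hW : W.Nonempty, W.min' hW ∈ V ∧ W.max' hW ∈ V) :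
    π.cuts ⊆ ρ.cuts := by
  intro k hk W hW a ha b hb hak
  obtain ⟨V, hV, hmm⟩ := h W hW
  obtain ⟨hmin, hmax⟩ := hmm ⟨a, ha⟩
  calc b ≤ W.max' ⟨a, ha⟩ := W.le_max' b hb
    _ ≤ k := (le_iff_le_of_mem_cuts hk hV hmin hmax).1 ((W.min'_le a ha).trans hak)

def sameSideSetoid (π : Finpartition (univ : Finset (Fin n))) : Setoid (Fin n) where
  r i j := ∀ k ∈ π.cuts, (i ≤ k ↔ j ≤ k)
  iseqv := ⟨fun _ _ _ => Iff.rfl, fun h k hk => (h k hk).symm,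
    fun h h' k hk => (h k hk).trans (h' k hk)⟩

open Classical in
noncomputable def intervalHull (π : Finpartition (univ : Finset (Fin n))) :
    Finpartition (univ : Finset (Fin n)) :=
  ofSetoid (sameSideSetoid π)

theorem mem_part_intervalHull {i j : Fin n} :
    j ∈ π.intervalHull.part i ↔ ∀ k ∈ π.cuts, (i ≤ k ↔ j ≤ k) := by
  classical exact mem_part_ofSetoid_iff_rel

theorem le_intervalHull (π : Finpartition (univ : Finset (Fin n))) : π ≤ π.intervalHull := by
  intro V hV
  obtain ⟨a, ha⟩ := π.nonempty_of_mem_parts hV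
  refine ⟨_, π.intervalHull.part_mem.2 (mem_univ a), fun b hb => ?_⟩
  exact mem_part_intervalHull.2 fun k hk => le_iff_le_of_mem_cuts hk hV ha hb

theorem isIntv_intervalHull (π : Finpartition (univ : Finset (Fin n))) :
    IsIntv π.intervalHull := by
  intro V hV a ha c hc b hab hbc
  rw [← part_eq_of_mem _ hV ha, mem_part_intervalHull] at hc ⊢
  exact fun k hk => ⟨fun hak => hbc.trans ((hc k hk).1 hak), hab.trans⟩

end Finpartition

open Finpartition

variable {n : ℕ} {π ρ : Finpartition (univ : Finset (Fin n))}

theorem Ll.cuts_eq (h : Ll π ρ) : ρ.cuts = π.cuts :=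
  (cuts_anti h.1).antisymm (cuts_subset_of_min'_max'_mem h.2)

theorem IsIntv.max'_mem_cuts (hρ : IsIntv ρ) {W : Finset (Fin n)} (hW : W ∈ ρ.parts)
    (hne : W.Nonempty) : W.max' hne ∈ ρ.cuts := by
  intro U hU a ha b hb haM
  by_contra! hMb
  have hMU : W.max' hne ∈ U := hρ U hU a ha b hb _ haM hMb.le
  obtain rfl := ρ.eq_of_mem_parts hU hW hMU (W.max'_mem hne)
  exact (U.le_max' b hb).not_gt hMb

theorem IsIntv.mem_part_iff (hρ : IsIntv ρ) {i j : Fin n} :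
    j ∈ ρ.part i ↔ ∀ k ∈ ρ.cuts, (i ≤ k ↔ j ≤ k) := by
  have hiW : i ∈ ρ.part i := ρ.mem_part (mem_univ i)
  have hW : ρ.part i ∈ ρ.parts := ρ.part_mem.2 (mem_univ i)
  refine ⟨fun hj k hk => le_iff_le_of_mem_cuts hk hW hiW hj, fun hij => ?_⟩
  wlog hle : i ≤ j generalizing i j
  · have hji := this (ρ.mem_part (mem_univ j)) (ρ.part_mem.2 (mem_univ j))
      (fun k hk => (hij k hk).symm) (le_of_not_ge hle)
    rw [ρ.part_eq_of_mem (ρ.part_mem.2 (mem_univ j)) hji]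
    exact ρ.mem_part (mem_univ j)
  have hjM : j ≤ (ρ.part i).max' ⟨i, hiW⟩ :=
    (hij _ (hρ.max'_mem_cuts hW _)).1 ((ρ.part i).le_max' i hiW)
  exact hρ _ hW i hiW _ ((ρ.part i).max'_mem _) j hle hjM

theorem IsIntv.ext_of_cuts_eq {ρ' : Finpartition (univ : Finset (Fin n))} (hρ : IsIntv ρ)
    (hρ' : IsIntv ρ') (h : ρ.cuts = ρ'.cuts) : ρ = ρ' :=
  ext_of_part_eq fun _ => Finset.ext fun _ => by rw [hρ.mem_part_iff, hρ'.mem_part_iff, h]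

theorem IsIntv.min'_le_of_min'_le (hρ : IsIntv ρ) (hle : π ≤ ρ) {W : Finset (Fin n)}
    (hW : W ∈ ρ.parts) (hne : W.Nonempty) :
    ∀ U ∈ π.parts, ∀ x ∈ U, ∀ y ∈ U, W.min' hne ≤ x → W.min' hne ≤ y := by
  intro U hU x hx y hy hmx
  by_contra! hym
  obtain ⟨W', hW', hUW'⟩ := hle hU
  have hmW' : W.min' hne ∈ W' := hρ W' hW' y (hUW' hy) x (hUW' hx) _ hym.le hmx
  obtain rfl := ρ.eq_of_mem_parts hW' hW hmW' (W.min'_mem hne)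
  exact hym.not_ge (W'.min'_le y (hUW' hy))

/-- `hm` says that no block of `π` straddles the gap just below `m`. -/
theorem IsNC.max'_mem_cuts (hπ : IsNC π) {V : Finset (Fin n)} (hV : V ∈ π.parts) {m : Fin n}
    (hmV : m ∈ V) (hm : ∀ U ∈ π.parts, ∀ x ∈ U, ∀ y ∈ U, m ≤ x → m ≤ y) :
    V.max' ⟨m, hmV⟩ ∈ π.cuts := by
  set M := V.max' ⟨m, hmV⟩
  intro U hU a ha b hb haM
  by_contra! hMb
  have hUV : U ≠ V := fun h => hMb.not_ge (V.le_max' b (h ▸ hb))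
  have haV : a ∉ V := fun h => hUV (π.eq_of_mem_parts hU hV ha h)
  have hma : m < a :=
    (hm U hU b hb a ha ((V.le_max' m hmV).trans hMb.le)).lt_of_ne (ne_of_mem_of_not_mem hmV haV)
  have haM' : a < M := haM.lt_of_ne fun h => haV (h ▸ V.max'_mem _)
  exact hUV (hπ m a M b hma haM' hMb V hV U hU hmV (V.max'_mem _) ha hb).symm

theorem IsNC.ll_intervalHull (hπ : IsNC π) : Ll π π.intervalHull := by
  refine ⟨le_intervalHull π, fun W hW => ?_⟩
  have hne := π.intervalHull.nonempty_of_mem_parts hW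
  set m := W.min' hne
  have hV : π.part m ∈ π.parts := π.part_mem.2 (mem_univ m)
  have hmV : m ∈ π.part m := π.mem_part (mem_univ m)
  refine ⟨π.part m, hV, fun _ => ⟨hmV, ?_⟩⟩
  set M := (π.part m).max' ⟨m, hmV⟩
  have hM : M ∈ π.cuts := hπ.max'_mem_cuts hV hmV
    ((isIntv_intervalHull π).min'_le_of_min'_le (le_intervalHull π) hW hne)
  have hWm : ∀ x, x ∈ W ↔ ∀ k ∈ π.cuts, (m ≤ k ↔ x ≤ k) := fun x => by
    rw [← part_eq_of_mem _ hW (W.min'_mem hne), mem_part_intervalHull]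
  have hMW : M ∈ W :=
    (hWm M).2 fun k hk => le_iff_le_of_mem_cuts hk hV hmV ((π.part m).max'_mem _)
  have hWM : W.max' hne ≤ M :=
    ((hWm _).1 (W.max'_mem hne) M hM).1 ((π.part m).le_max' m hmV)
  rw [le_antisymm hWM (W.le_max' M hMW)]
  exact (π.part m).max'_mem _

/-- For every non-crossing partition `π` of `{1,…,n}` there exists a unique interval
partition `ρ` with `π ≪ ρ`. -/
theorem exists_unique_interval_ll (n : ℕ)
    (π : Finpartition (Finset.univ : Finset (Fin n))) (hπ : IsNC π) :
    ∃! ρ : Finpartition (Finset.univ : Finset (Fin n)), IsIntv ρ ∧ Ll π ρ := by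
  refine ⟨π.intervalHull, ⟨isIntv_intervalHull π, hπ.ll_intervalHull⟩, fun ρ ⟨hρ, hll⟩ => ?_⟩
  exact hρ.ext_of_cuts_eq (isIntv_intervalHull π)
    (hll.cuts_eq.trans hπ.ll_intervalHull.cuts_eq.symm)
end

section
/- The maximal elements of the poset (NC(n), ≪) are exactly the interval partitions of {1,…,n}. -/
/-!
An interval partition `π` is maximal: if `π ≪ ρ`, every block of `ρ` has its extremities in one
block of `π`, which, being an interval, contains the whole block; so `ρ ≤ π`.

Conversely, if a block `V` of a non-crossing `π` has a gap, there are `p ∈ V` and its successor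
`q ∉ V` below some `c ∈ V`. Non-crossing forces the block `B` of `q` to lie strictly between
`p` and `c`, so merging `B` into `V` keeps the extremities of the merged block in `V`. The merged
partition `ρ ≠ π` is again non-crossing and satisfies `π ≪ ρ`.
-/

namespace Finpartition

variable {α : Type*} [DecidableEq α] {s : Finset α} (P : Finpartition s) {V B : Finset α}

def mergeParts (hV : V ∈ P.parts) (hB : B ∈ P.parts) : Finpartition s where
  parts := insert (V ∪ B) ((P.parts.erase V).erase B)
  supIndep := by
    have hdisj : ∀ X ∈ P.parts, X ≠ V → X ≠ B → Disjoint (V ∪ B) X := fun X hX hXV hXB =>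
      Finset.disjoint_union_left.2
        ⟨P.disjoint hV hX (Ne.symm hXV), P.disjoint hB hX (Ne.symm hXB)⟩
    rw [Finset.supIndep_iff_pairwiseDisjoint, Finset.coe_insert]
    refine Set.PairwiseDisjoint.insert (P.disjoint.subset ?_) fun X hX _ => ?_
    · intro X hX
      exact Finset.mem_of_mem_erase (Finset.mem_of_mem_erase hX)
    · simp only [Finset.coe_erase, Set.mem_sdiff, Finset.mem_coe, Set.mem_singleton_iff] at hX
      exact hdisj X hX.1.1 hX.1.2 hX.2
  sup_parts := by
    refine le_antisymm (Finset.sup_le fun X hX => ?_) fun x hx => ?_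
    · rcases Finset.mem_insert.1 hX with rfl | hX
      · exact Finset.union_subset (P.le hV) (P.le hB)
      · exact P.le (Finset.mem_of_mem_erase (Finset.mem_of_mem_erase hX))
    · obtain ⟨X, hX, hxX⟩ := P.exists_mem hx
      rw [Finset.mem_sup]
      by_cases hXVB : X = V ∨ X = B
      · refine ⟨V ∪ B, Finset.mem_insert_self _ _, ?_⟩
        rcases hXVB with rfl | rfl <;> simp [hxX]
      · rw [not_or] at hXVB
        exact ⟨X, Finset.mem_insert_of_mem (by simp [hX, hXVB.1, hXVB.2]), hxX⟩
  bot_notMem := by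
    simp only [Finset.bot_eq_empty, Finset.mem_insert, Finset.mem_erase, not_or]
    exact ⟨fun h => P.ne_empty hV (Finset.union_eq_empty.1 h.symm).1,
      fun h => P.empty_notMem_parts h.2.2⟩

variable {P}
variable {hV : V ∈ P.parts} {hB : B ∈ P.parts}

theorem notMem_of_mem_of_ne {X Y : Finset α} {x : α} (hX : X ∈ P.parts) (hY : Y ∈ P.parts)
    (hXY : X ≠ Y) (hx : x ∈ X) : x ∉ Y :=
  fun hy => hXY (P.eq_of_mem_parts hX hY hx hy)

theorem mem_mergeParts {X : Finset α} :
    X ∈ (P.mergeParts hV hB).parts ↔ X = V ∪ B ∨ X ∈ P.parts ∧ X ≠ V ∧ X ≠ B := by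
  simp only [mergeParts, Finset.mem_insert, Finset.mem_erase]
  tauto

theorem le_mergeParts : P ≤ P.mergeParts hV hB := by
  intro X hX
  by_cases hXVB : X = V ∨ X = B
  · refine ⟨V ∪ B, mem_mergeParts.2 (Or.inl rfl), ?_⟩
    rcases hXVB with rfl | rfl
    exacts [Finset.subset_union_left, Finset.subset_union_right]
  · rw [not_or] at hXVB
    exact ⟨X, mem_mergeParts.2 (Or.inr ⟨hX, hXVB⟩), le_rfl⟩

theorem mergeParts_ne (hVB : V ≠ B) : P.mergeParts hV hB ≠ P := by
  intro h
  have hVB_mem : V ∪ B ∈ P.parts := h ▸ mem_mergeParts.2 (Or.inl rfl)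
  obtain ⟨x, hx⟩ := P.nonempty_of_mem_parts hV
  obtain ⟨y, hy⟩ := P.nonempty_of_mem_parts hB
  exact hVB <| (P.eq_of_mem_parts hV hVB_mem hx (Finset.mem_union_left B hx)).trans
    (P.eq_of_mem_parts hVB_mem hB (Finset.mem_union_right V hy) hy)

end Finpartition

theorem CovBy.lt_or_lt_of_ne {α : Type*} [LinearOrder α] {p q y : α} (h : p ⋖ q) (hp : p ≠ y)
    (hq : q ≠ y) : y < p ∨ q < y :=
  (lt_or_gt_of_ne hp.symm).imp_right fun hpy => lt_of_le_of_ne (h.ge_of_gt hpy) hq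

theorem Finset.exists_covBy_notMem_of_mem_of_notMem {α : Type*} [LinearOrder α]
    [IsStronglyAtomic α] {V : Finset α} {a b c : α} (ha : a ∈ V) (hc : c ∈ V) (hab : a ≤ b)
    (hbc : b ≤ c) (hb : b ∉ V) : ∃ p ∈ V, ∃ q ∉ V, p ⋖ q ∧ q < c := by
  have hab' : a < b := lt_of_le_of_ne hab (ne_of_mem_of_not_mem ha hb)
  have hbc' : b < c := lt_of_le_of_ne hbc (ne_of_mem_of_not_mem hc hb).symm
  have hL : (V.filter (· < b)).Nonempty := ⟨a, Finset.mem_filter.2 ⟨ha, hab'⟩⟩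
  obtain ⟨hpV, hpb⟩ := Finset.mem_filter.1 ((V.filter (· < b)).max'_mem hL)
  obtain ⟨q, hpq, hqb⟩ := exists_covBy_le_of_lt hpb
  refine ⟨_, hpV, q, fun hqV => ?_, hpq, hqb.trans_lt hbc'⟩
  rcases hqb.lt_or_eq with hqb | rfl
  · exact hpq.lt.not_ge ((V.filter (· < b)).le_max' q (Finset.mem_filter.2 ⟨hqV, hqb⟩))
  · exact hb hqV

section NonCrossing

open Finpartition

variable {n : ℕ} {π ρ : Finpartition (Finset.univ : Finset (Fin n))} {V B Y : Finset (Fin n)}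

theorem IsIntv.eq_of_ll (h : IsIntv π) (hll : Ll π ρ) : ρ = π := by
  refine le_antisymm (fun W hW => ?_) hll.1
  obtain ⟨V, hV, hminmax⟩ := hll.2 W hW
  have hW : W.Nonempty := ρ.nonempty_of_mem_parts hW
  exact ⟨V, hV, fun x hx => h V hV _ (hminmax hW).1 _ (hminmax hW).2 x (W.min'_le x hx)
    (W.le_max' x hx)⟩

theorem IsNC.not_crossing (hπ : IsNC π) {X : Finset (Fin n)} (hX : X ∈ π.parts)
    (hY : Y ∈ π.parts) (hXY : X ≠ Y) {a b c d : Fin n} (hab : a < b) (hbc : b < c) (hcd : c < d)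
    (ha : a ∈ X) (hc : c ∈ X) (hb : b ∈ Y) (hd : d ∈ Y) : False :=
  hXY (hπ a b c d hab hbc hcd X hX Y hY ha hc hb hd)

theorem IsNC.lt_and_lt_of_mem (hπ : IsNC π) (hV : V ∈ π.parts) (hB : B ∈ π.parts) (hVB : V ≠ B)
    {p q c : Fin n} (hp : p ∈ V) (hq : q ∈ B) (hc : c ∈ V) (hpq : p < q) (hqc : q < c) :
    ∀ x ∈ B, p < x ∧ x < c := by
  intro x hx
  have hxV : x ∉ V := π.notMem_of_mem_of_ne hB hV hVB.symm hx
  constructor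
  · refine lt_of_not_ge fun hxp => ?_
    exact hπ.not_crossing hB hV hVB.symm
      (lt_of_le_of_ne hxp (ne_of_mem_of_not_mem hp hxV).symm) hpq hqc hx hq hp hc
  · refine lt_of_not_ge fun hcx => ?_
    exact hπ.not_crossing hV hB hVB hpq hqc
      (lt_of_le_of_ne hcx (ne_of_mem_of_not_mem hc hxV)) hp hc hq hx

theorem IsNC.not_crossing_mergeParts_left (hπ : IsNC π) (hV : V ∈ π.parts) (hB : B ∈ π.parts)
    (hY : Y ∈ π.parts) (hYV : Y ≠ V) (hYB : Y ≠ B) {p q c : Fin n} (hpq : p ⋖ q) (hp : p ∈ V)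
    (hq : q ∈ B) (hc : c ∈ V) (hBpc : ∀ x ∈ B, p < x ∧ x < c) {a b c' d : Fin n} (hab : a < b)
    (hbc : b < c') (hcd : c' < d) (ha : a ∈ V ∪ B) (hc' : c' ∈ V ∪ B) (hb : b ∈ Y)
    (hd : d ∈ Y) : False := by
  rcases Finset.mem_union.1 ha with haV | haB <;> rcases Finset.mem_union.1 hc' with hcV | hcB
  · exact hπ.not_crossing hV hY hYV.symm hab hbc hcd haV hcV hb hd
  · rcases lt_or_gt_of_ne (ne_of_mem_of_not_mem hc (π.notMem_of_mem_of_ne hY hV hYV hd))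
      with hcd' | hdc
    · exact hπ.not_crossing hV hY hYV.symm hab (hbc.trans (hBpc c' hcB).2) hcd' haV hc hb hd
    · rcases hpq.lt_or_lt_of_ne (ne_of_mem_of_not_mem hp (π.notMem_of_mem_of_ne hY hV hYV hb))
        (ne_of_mem_of_not_mem hq (π.notMem_of_mem_of_ne hY hB hYB hb)) with hbp | hqb
      · exact hπ.not_crossing hY hV hYV hbp ((hBpc c' hcB).1.trans hcd) hdc hb hd hp hc
      · exact hπ.not_crossing hB hY hYB.symm hqb hbc hcd hq hcB hb hd
  · exact hπ.not_crossing hV hY hYV.symm ((hBpc a haB).1.trans hab) hbc hcd hp hcV hb hd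
  · exact hπ.not_crossing hB hY hYB.symm hab hbc hcd haB hcB hb hd

theorem IsNC.not_crossing_mergeParts_right (hπ : IsNC π) (hV : V ∈ π.parts) (hB : B ∈ π.parts)
    (hY : Y ∈ π.parts) (hYV : Y ≠ V) (hYB : Y ≠ B) {p q c : Fin n} (hpq : p ⋖ q) (hp : p ∈ V)
    (hq : q ∈ B) (hc : c ∈ V) (hBpc : ∀ x ∈ B, p < x ∧ x < c) {a b c' d : Fin n} (hab : a < b)
    (hbc : b < c') (hcd : c' < d) (ha : a ∈ Y) (hc' : c' ∈ Y) (hb : b ∈ V ∪ B)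
    (hd : d ∈ V ∪ B) : False := by
  rcases Finset.mem_union.1 hb with hbV | hbB <;> rcases Finset.mem_union.1 hd with hdV | hdB
  · exact hπ.not_crossing hY hV hYV hab hbc hcd ha hc' hbV hdV
  · exact hπ.not_crossing hY hV hYV hab hbc (hcd.trans (hBpc d hdB).2) ha hc' hbV hc
  · rcases hpq.lt_or_lt_of_ne (ne_of_mem_of_not_mem hp (π.notMem_of_mem_of_ne hY hV hYV ha))
      (ne_of_mem_of_not_mem hq (π.notMem_of_mem_of_ne hY hB hYB ha)) with hap | hqa
    · exact hπ.not_crossing hY hV hYV hap ((hBpc b hbB).1.trans hbc) hcd ha hc' hp hdV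
    · exact hπ.not_crossing hB hY hYB.symm hqa hab hbc hq hbB ha hc'
  · exact hπ.not_crossing hY hB hYB hab hbc hcd ha hc' hbB hdB

/-- Merging is safe because `V` and `B` touch at the covering pair `p ⋖ q`: a block crossing
`V ∪ B` would have to pass through that pair, and so it crosses `V` or `B` already. -/
theorem IsNC.mergeParts (hπ : IsNC π) (hV : V ∈ π.parts) (hB : B ∈ π.parts) {p q c : Fin n}
    (hpq : p ⋖ q) (hp : p ∈ V) (hq : q ∈ B) (hc : c ∈ V) (hBpc : ∀ x ∈ B, p < x ∧ x < c) :
    IsNC (π.mergeParts hV hB) := by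
  intro a b c' d hab hbc hcd X hX Z hZ ha hc' hb hd
  rcases mem_mergeParts.1 hX with rfl | ⟨hX, hXV, hXB⟩ <;>
    rcases mem_mergeParts.1 hZ with rfl | ⟨hZ, hZV, hZB⟩
  · rfl
  · exact (hπ.not_crossing_mergeParts_left hV hB hZ hZV hZB hpq hp hq hc hBpc hab hbc hcd ha hc'
      hb hd).elim
  · exact (hπ.not_crossing_mergeParts_right hV hB hX hXV hXB hpq hp hq hc hBpc hab hbc hcd ha hc'
      hb hd).elim
  · exact hπ a b c' d hab hbc hcd X hX Z hZ ha hc' hb hd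

theorem ll_mergeParts (hV : V ∈ π.parts) (hB : B ∈ π.parts) {p c : Fin n} (hp : p ∈ V)
    (hc : c ∈ V) (hBpc : ∀ x ∈ B, p < x ∧ x < c) : Ll π (π.mergeParts hV hB) := by
  refine ⟨le_mergeParts, fun W hW => ?_⟩
  rcases mem_mergeParts.1 hW with rfl | ⟨hW, -⟩
  · refine ⟨V, hV, fun hne => ⟨?_, ?_⟩⟩
    · refine (Finset.mem_union.1 ((V ∪ B).min'_mem hne)).resolve_right fun h => ?_
      exact ((V ∪ B).min'_le p (Finset.mem_union_left B hp)).not_gt (hBpc _ h).1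
    · refine (Finset.mem_union.1 ((V ∪ B).max'_mem hne)).resolve_right fun h => ?_
      exact ((V ∪ B).le_max' c (Finset.mem_union_left B hc)).not_gt (hBpc _ h).2
  · exact ⟨W, hW, fun hne => ⟨W.min'_mem hne, W.max'_mem hne⟩⟩

theorem IsNC.exists_ll_ne_of_not_isIntv (hπ : IsNC π) (h : ¬IsIntv π) :
    ∃ ρ, IsNC ρ ∧ Ll π ρ ∧ ρ ≠ π := by
  obtain ⟨V, hV, a, ha, c, hc, b, hab, hbc, hb⟩ :
      ∃ V ∈ π.parts, ∃ a ∈ V, ∃ c ∈ V, ∃ b, a ≤ b ∧ b ≤ c ∧ b ∉ V := by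
    simpa [IsIntv] using h
  obtain ⟨p, hp, q, hqV, hpq, hqc⟩ := V.exists_covBy_notMem_of_mem_of_notMem ha hc hab hbc hb
  obtain ⟨B, hB, hq⟩ := π.exists_mem (Finset.mem_univ q)
  have hVB : V ≠ B := by
    rintro rfl
    exact hqV hq
  have hBpc := hπ.lt_and_lt_of_mem hV hB hVB hp hq hc hpq.lt hqc
  exact ⟨π.mergeParts hV hB, hπ.mergeParts hV hB hpq hp hq hc hBpc, ll_mergeParts hV hB hp hc hBpc,
    mergeParts_ne hVB⟩

end NonCrossing

/-- The maximal elements of the poset `(NC(n), ≪)` are exactly the interval partitions. -/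
theorem ll_maximal_iff_interval (n : ℕ)
    (π : Finpartition (Finset.univ : Finset (Fin n))) (hπ : IsNC π) :
    (∀ ρ : Finpartition (Finset.univ : Finset (Fin n)), IsNC ρ → Ll π ρ → ρ = π) ↔
      IsIntv π := by
  refine ⟨fun hmax => by_contra fun h => ?_, fun h ρ _ hll => h.eq_of_ll hll⟩
  obtain ⟨ρ, hρ, hll, hne⟩ := hπ.exists_ll_ne_of_not_isIntv h
  exact hne (hmax ρ hρ hll)
end

section
/- Let π ∈ NC(n) with π ≪ 1ₙ and let V_o(π) be its unique outer block. Then the map ρ ↦ {V ∈ π : V is ρ-special} is a bijection from the set {ρ ∈ NC(n) : π ≪ ρ ≪ 1ₙ} onto the collection of subsets 𝔙 of the blocks of π with V_o(π) ∈ 𝔙. -/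
/-- Given `π ≪ ρ`, a block `V` of `π` is `ρ`-special when some block `W` of `ρ` has
`min V = min W` and `max V = max W`. -/
def IsSpecial {n : ℕ} (ρ : Finpartition (Finset.univ : Finset (Fin n)))
    (V : Finset (Fin n)) : Prop :=
  ∃ W ∈ ρ.parts, V.min = W.min ∧ V.max = W.max

/-! The spans `[min V, max V]` of the blocks of a non-crossing partition are laminar. Each block
of `ρ` has exactly one `ρ`-special block, with the same span, and `ρ` is recovered from its set `𝔙`
of special blocks: `x` and `y` share a block of `ρ` iff the innermost block of `𝔙` whose span
contains `x` is the one for `y`. Conversely, for any `𝔙` containing the outer block, the fibres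
of this innermost-block map form a non-crossing `ρ` with `π ≪ ρ ≪ 1ₙ` whose special blocks are
exactly `𝔙`. -/

open Finset

lemma Finpartition.eq_of_part_eq_part_iff {α : Type*} [DecidableEq α] {s : Finset α}
    {P Q : Finpartition s}
    (h : ∀ a ∈ s, ∀ b ∈ s, P.part a = P.part b ↔ Q.part a = Q.part b) : P = Q := by
  have hpart : ∀ a ∈ s, P.part a = Q.part a := by
    intro a ha
    ext b
    by_cases hb : b ∈ s
    · rw [P.mem_part_iff_part_eq_part hb ha, Q.mem_part_iff_part_eq_part hb ha, h b hb a ha]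
    · exact iff_of_false (fun h' => hb (P.part_subset a h')) (fun h' => hb (Q.part_subset a h'))
  ext t
  constructor
  · intro ht
    obtain ⟨a, ha, rfl⟩ := P.part_surjOn ht
    rw [hpart a ha]
    exact Q.part_mem.2 ha
  · intro ht
    obtain ⟨a, ha, rfl⟩ := Q.part_surjOn ht
    rw [← hpart a ha]
    exact P.part_mem.2 ha

namespace NCPartition

variable {n : ℕ} {U V W : Finset (Fin (n + 1))} {x y : Fin (n + 1)}

/-- The default value `0` (here and in `hi`) only concerns `∅`, which is never a block. -/
def lo (V : Finset (Fin (n + 1))) : Fin (n + 1) := V.min.untopD 0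

def hi (V : Finset (Fin (n + 1))) : Fin (n + 1) := V.max.unbotD 0

lemma min'_eq_lo (h : V.Nonempty) : V.min' h = lo V := by
  rw [lo, ← coe_min' h, WithTop.untopD_coe]

lemma max'_eq_hi (h : V.Nonempty) : V.max' h = hi V := by
  rw [hi, ← coe_max' h, WithBot.unbotD_coe]

lemma coe_lo (h : V.Nonempty) : (lo V : WithTop (Fin (n + 1))) = V.min := by
  rw [← min'_eq_lo h, coe_min']

lemma coe_hi (h : V.Nonempty) : (hi V : WithBot (Fin (n + 1))) = V.max := by
  rw [← max'_eq_hi h, coe_max']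

lemma lo_mem (h : V.Nonempty) : lo V ∈ V := min'_eq_lo h ▸ V.min'_mem h

lemma hi_mem (h : V.Nonempty) : hi V ∈ V := max'_eq_hi h ▸ V.max'_mem h

lemma lo_le (hx : x ∈ V) : lo V ≤ x := min'_eq_lo ⟨x, hx⟩ ▸ V.min'_le x hx

lemma le_hi (hx : x ∈ V) : x ≤ hi V := max'_eq_hi ⟨x, hx⟩ ▸ V.le_max' x hx

lemma lo_eq_zero (h : 0 ∈ V) : lo V = 0 := le_antisymm (lo_le h) (Fin.zero_le _)

lemma hi_eq_last (h : Fin.last n ∈ V) : hi V = Fin.last n :=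
  le_antisymm (Fin.le_last _) (le_hi h)

lemma isSpecial_iff {ρ : Finpartition (univ : Finset (Fin (n + 1)))} (hV : V.Nonempty) :
    IsSpecial ρ V ↔ ∃ W ∈ ρ.parts, lo V = lo W ∧ hi V = hi W := by
  refine exists_congr fun W => and_congr_right fun hW => ?_
  have hW' := ρ.nonempty_of_mem_parts hW
  rw [← coe_lo hV, ← coe_lo hW', ← coe_hi hV, ← coe_hi hW', WithTop.coe_inj, WithBot.coe_inj]

def Spans (U : Finset (Fin (n + 1))) (x : Fin (n + 1)) : Prop := lo U ≤ x ∧ x ≤ hi U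

def Encloses (U V : Finset (Fin (n + 1))) : Prop := lo U ≤ lo V ∧ hi V ≤ hi U

lemma spans_of_mem (hx : x ∈ U) : Spans U x := ⟨lo_le hx, le_hi hx⟩

lemma Encloses.spans (h : Encloses U V) (hx : x ∈ V) : Spans U x :=
  ⟨h.1.trans (lo_le hx), (le_hi hx).trans h.2⟩

variable {π ρ : Finpartition (univ : Finset (Fin (n + 1)))} {𝔙 : Set (Finset (Fin (n + 1)))}

lemma lo_inj (hV : V ∈ π.parts) (hW : W ∈ π.parts) : lo V = lo W ↔ V = W :=
  ⟨fun h => π.eq_of_mem_parts hV hW (lo_mem (π.nonempty_of_mem_parts hV))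
    (h ▸ lo_mem (π.nonempty_of_mem_parts hW)), congrArg lo⟩

lemma eq_of_encloses_of_encloses (hV : V ∈ π.parts) (hW : W ∈ π.parts) (hVW : Encloses V W)
    (hWV : Encloses W V) : V = W :=
  (lo_inj hV hW).1 (le_antisymm hVW.1 hWV.1)

/-- Otherwise an endpoint of `V` and `x` would interleave with the endpoints of `W`. -/
lemma encloses_of_mem_of_spans (hπ : IsNC π) (hV : V ∈ π.parts) (hW : W ∈ π.parts)
    (hne : V ≠ W) (hx : x ∈ V) (hxW : Spans W x) : Encloses W V := by
  have hWne := π.nonempty_of_mem_parts hW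
  have hxW' : x ∉ W := fun h => hne (π.eq_of_mem_parts hV hW hx h)
  have h1 : lo W < x := lt_of_le_of_ne hxW.1 fun h => hxW' (h ▸ lo_mem hWne)
  have h2 : x < hi W := lt_of_le_of_ne hxW.2 fun h => hxW' (h ▸ hi_mem hWne)
  constructor
  · by_contra! h
    exact hne (hπ _ _ _ _ h h1 h2 V hV W hW (lo_mem ⟨x, hx⟩) hx (lo_mem hWne) (hi_mem hWne))
  · by_contra! h
    exact hne (hπ _ _ _ _ h1 h2 h W hW V hV (lo_mem hWne) (hi_mem hWne) hx (hi_mem ⟨x, hx⟩)).symm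

lemma encloses_or_encloses (hπ : IsNC π) (hV : V ∈ π.parts) (hW : W ∈ π.parts)
    (hxV : Spans V x) (hxW : Spans W x) : Encloses V W ∨ Encloses W V := by
  obtain rfl | hne := eq_or_ne V W
  · exact Or.inl ⟨le_rfl, le_rfl⟩
  rcases le_total (lo V) (lo W) with h | h
  · exact Or.inl (encloses_of_mem_of_spans hπ hW hV hne.symm
      (lo_mem (π.nonempty_of_mem_parts hW)) ⟨h, hxW.1.trans hxV.2⟩)
  · exact Or.inr (encloses_of_mem_of_spans hπ hV hW hne
      (lo_mem (π.nonempty_of_mem_parts hV)) ⟨h, hxV.1.trans hxW.2⟩)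

open scoped Classical in
noncomputable def covers (π : Finpartition (univ : Finset (Fin (n + 1))))
    (𝔙 : Set (Finset (Fin (n + 1)))) (x : Fin (n + 1)) : Finset (Finset (Fin (n + 1))) :=
  {U ∈ π.parts | U ∈ 𝔙 ∧ Spans U x}

lemma mem_covers : U ∈ covers π 𝔙 x ↔ U ∈ π.parts ∧ U ∈ 𝔙 ∧ Spans U x := by
  simp [covers]

/-- The spans of the blocks of a non-crossing partition are laminar, so among the blocks of `𝔙`
spanning `x` the one with the largest minimum is enclosed by all others. -/
noncomputable def innermost (π : Finpartition (univ : Finset (Fin (n + 1))))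
    (𝔙 : Set (Finset (Fin (n + 1)))) (x : Fin (n + 1)) : Finset (Fin (n + 1)) :=
  if h : (covers π 𝔙 x).Nonempty then (exists_max_image _ lo h).choose else ∅

lemma innermost_mem_covers (h : (covers π 𝔙 x).Nonempty) : innermost π 𝔙 x ∈ covers π 𝔙 x := by
  rw [innermost, dif_pos h]
  exact (exists_max_image _ lo h).choose_spec.1

lemma lo_le_lo_innermost (hU : U ∈ covers π 𝔙 x) : lo U ≤ lo (innermost π 𝔙 x) := by
  have h : (covers π 𝔙 x).Nonempty := ⟨U, hU⟩
  rw [innermost, dif_pos h]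
  exact (exists_max_image _ lo h).choose_spec.2 U hU

lemma innermost_mem_parts (h : (covers π 𝔙 x).Nonempty) : innermost π 𝔙 x ∈ π.parts :=
  (mem_covers.1 (innermost_mem_covers h)).1

lemma innermost_mem (h : (covers π 𝔙 x).Nonempty) : innermost π 𝔙 x ∈ 𝔙 :=
  (mem_covers.1 (innermost_mem_covers h)).2.1

lemma spans_innermost (h : (covers π 𝔙 x).Nonempty) : Spans (innermost π 𝔙 x) x :=
  (mem_covers.1 (innermost_mem_covers h)).2.2

lemma encloses_innermost (hπ : IsNC π) (hU : U ∈ covers π 𝔙 x) :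
    Encloses U (innermost π 𝔙 x) := by
  have hC := innermost_mem_parts ⟨U, hU⟩
  obtain ⟨hUp, -, hxU⟩ := mem_covers.1 hU
  rcases encloses_or_encloses hπ hUp hC hxU (spans_innermost ⟨U, hU⟩) with h | h
  · exact h
  · rw [(lo_inj hUp hC).1 (le_antisymm (lo_le_lo_innermost hU) h.1)]
    exact ⟨le_rfl, le_rfl⟩

lemma innermost_eq_of_mem (hπ : IsNC π) (hU : U ∈ π.parts) (h𝔙 : U ∈ 𝔙) (hx : x ∈ U) :
    innermost π 𝔙 x = U := by
  have hUc : U ∈ covers π 𝔙 x := mem_covers.2 ⟨hU, h𝔙, spans_of_mem hx⟩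
  have hC := innermost_mem_parts ⟨U, hUc⟩
  by_contra hne
  exact hne (eq_of_encloses_of_encloses hC hU
    (encloses_of_mem_of_spans hπ hU hC (Ne.symm hne) hx (spans_innermost ⟨U, hUc⟩))
    (encloses_innermost hπ hUc))

lemma innermost_eq_of_mem_part (hπ : IsNC π) (hV : V ∈ π.parts) (hx : x ∈ V) (hy : y ∈ V) :
    innermost π 𝔙 x = innermost π 𝔙 y := by
  suffices ∀ {x y}, x ∈ V → y ∈ V → ∀ U, U ∈ covers π 𝔙 x → U ∈ covers π 𝔙 y by
    have hcov : covers π 𝔙 x = covers π 𝔙 y := Finset.ext fun U => ⟨this hx hy U, this hy hx U⟩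
    simp only [innermost, hcov]
  intro x y hx hy U hU
  obtain ⟨hUp, hU𝔙, hxU⟩ := mem_covers.1 hU
  refine mem_covers.2 ⟨hUp, hU𝔙, ?_⟩
  obtain rfl | hne := eq_or_ne V U
  · exact spans_of_mem hy
  · exact (encloses_of_mem_of_spans hπ hV hUp hne hx hxU).spans hy

lemma covers_nonempty_of_outer {Vo : Finset (Fin (n + 1))} (hVo : Vo ∈ π.parts) (h𝔙 : Vo ∈ 𝔙)
    (h0 : 0 ∈ Vo) (hlast : Fin.last n ∈ Vo) (x : Fin (n + 1)) : (covers π 𝔙 x).Nonempty :=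
  ⟨Vo, mem_covers.2 ⟨hVo, h𝔙, by
    rw [Spans, lo_eq_zero h0, hi_eq_last hlast]
    exact ⟨Fin.zero_le _, Fin.le_last _⟩⟩⟩

open scoped Classical in
noncomputable def ofBlocks (π : Finpartition (univ : Finset (Fin (n + 1))))
    (𝔙 : Set (Finset (Fin (n + 1)))) : Finpartition (univ : Finset (Fin (n + 1))) :=
  Finpartition.ofSetoid (Setoid.ker (innermost π 𝔙))

open scoped Classical in
lemma mem_ofBlocks_part : y ∈ (ofBlocks π 𝔙).part x ↔ innermost π 𝔙 x = innermost π 𝔙 y := by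
  rw [ofBlocks, Finpartition.mem_part_ofSetoid_iff_rel, Setoid.ker_def]

lemma ofBlocks_part_eq_part_iff :
    (ofBlocks π 𝔙).part x = (ofBlocks π 𝔙).part y ↔ innermost π 𝔙 x = innermost π 𝔙 y := by
  rw [← Finpartition.mem_part_iff_part_eq_part _ (mem_univ x) (mem_univ y), mem_ofBlocks_part,
    eq_comm]

lemma innermost_eq_of_mem_ofBlocks (hW : W ∈ (ofBlocks π 𝔙).parts) (hx : x ∈ W) (hy : y ∈ W) :
    innermost π 𝔙 x = innermost π 𝔙 y :=
  mem_ofBlocks_part.1 ((ofBlocks π 𝔙).part_eq_of_mem hW hx ▸ hy)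

lemma innermost_subset_ofBlocks_part (hπ : IsNC π) (hcov : ∀ x, (covers π 𝔙 x).Nonempty)
    (x : Fin (n + 1)) : innermost π 𝔙 x ⊆ (ofBlocks π 𝔙).part x := by
  intro y hy
  rw [mem_ofBlocks_part, innermost_eq_of_mem hπ (innermost_mem_parts (hcov x))
    (innermost_mem (hcov x)) hy]

lemma spans_innermost_of_mem_ofBlocks_part (hcov : ∀ x, (covers π 𝔙 x).Nonempty)
    (hy : y ∈ (ofBlocks π 𝔙).part x) : Spans (innermost π 𝔙 x) y := by
  rw [mem_ofBlocks_part.1 hy]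
  exact spans_innermost (hcov y)

lemma lo_ofBlocks_part (hπ : IsNC π) (hcov : ∀ x, (covers π 𝔙 x).Nonempty) (x : Fin (n + 1)) :
    lo ((ofBlocks π 𝔙).part x) = lo (innermost π 𝔙 x) :=
  le_antisymm (lo_le (innermost_subset_ofBlocks_part hπ hcov x
      (lo_mem (π.nonempty_of_mem_parts (innermost_mem_parts (hcov x))))))
    (spans_innermost_of_mem_ofBlocks_part hcov (lo_mem ((ofBlocks π 𝔙).part_nonempty.2
      (mem_univ x)))).1

lemma hi_ofBlocks_part (hπ : IsNC π) (hcov : ∀ x, (covers π 𝔙 x).Nonempty) (x : Fin (n + 1)) :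
    hi ((ofBlocks π 𝔙).part x) = hi (innermost π 𝔙 x) :=
  le_antisymm (spans_innermost_of_mem_ofBlocks_part hcov (hi_mem ((ofBlocks π 𝔙).part_nonempty.2
      (mem_univ x)))).2
    (le_hi (innermost_subset_ofBlocks_part hπ hcov x
      (hi_mem (π.nonempty_of_mem_parts (innermost_mem_parts (hcov x))))))

lemma isNC_ofBlocks (hπ : IsNC π) (hcov : ∀ x, (covers π 𝔙 x).Nonempty) :
    IsNC (ofBlocks π 𝔙) := by
  intro a b c d hab hbc hcd V hV W hW haV hcV hbW hdW
  have hac := innermost_eq_of_mem_ofBlocks hV haV hcV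
  have hbd := innermost_eq_of_mem_ofBlocks hW hbW hdW
  have hCc := spans_innermost (hcov c)
  have hCd := spans_innermost (hcov d)
  rw [← hac] at hCc
  rw [← hbd] at hCd
  -- `b` lies between `a` and `c`, `c` between `b` and `d`: each block spans a point of the other
  have hab' : Encloses (innermost π 𝔙 a) (innermost π 𝔙 b) := encloses_innermost hπ
    (mem_covers.2 ⟨innermost_mem_parts (hcov a), innermost_mem (hcov a),
      (spans_innermost (hcov a)).1.trans hab.le, hbc.le.trans hCc.2⟩)
  have hbc' : Encloses (innermost π 𝔙 b) (innermost π 𝔙 c) := encloses_innermost hπ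
    (mem_covers.2 ⟨innermost_mem_parts (hcov b), innermost_mem (hcov b),
      (spans_innermost (hcov b)).1.trans hbc.le, hcd.le.trans hCd.2⟩)
  rw [← hac] at hbc'
  have hC : innermost π 𝔙 a = innermost π 𝔙 b :=
    eq_of_encloses_of_encloses (innermost_mem_parts (hcov a)) (innermost_mem_parts (hcov b))
      hab' hbc'
  rw [← (ofBlocks π 𝔙).part_eq_of_mem hV haV, ← (ofBlocks π 𝔙).part_eq_of_mem hW hbW,
    ofBlocks_part_eq_part_iff, hC]

lemma ll_ofBlocks (hπ : IsNC π) (hcov : ∀ x, (covers π 𝔙 x).Nonempty) :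
    Ll π (ofBlocks π 𝔙) := by
  refine ⟨fun V hV => ?_, fun W hW => ?_⟩
  · obtain ⟨x, hx⟩ := π.nonempty_of_mem_parts hV
    refine ⟨(ofBlocks π 𝔙).part x, (ofBlocks π 𝔙).part_mem.2 (mem_univ x), fun y hy => ?_⟩
    exact mem_ofBlocks_part.2 (innermost_eq_of_mem_part hπ hV hx hy)
  · obtain ⟨x, -, rfl⟩ := (ofBlocks π 𝔙).part_surjOn hW
    have hCne := π.nonempty_of_mem_parts (innermost_mem_parts (hcov x))
    refine ⟨innermost π 𝔙 x, innermost_mem_parts (hcov x), fun hne => ?_⟩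
    rw [min'_eq_lo hne, max'_eq_hi hne, lo_ofBlocks_part hπ hcov, hi_ofBlocks_part hπ hcov]
    exact ⟨lo_mem hCne, hi_mem hCne⟩

lemma ll_top_ofBlocks (hπ : IsNC π) {Vo : Finset (Fin (n + 1))} (hVo : Vo ∈ π.parts)
    (h𝔙 : Vo ∈ 𝔙) (h0 : 0 ∈ Vo) (hlast : Fin.last n ∈ Vo) : Ll (ofBlocks π 𝔙) ⊤ := by
  refine ⟨le_top, fun W hW => ⟨(ofBlocks π 𝔙).part 0, (ofBlocks π 𝔙).part_mem.2 (mem_univ 0),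
    fun hne => ?_⟩⟩
  obtain rfl : W = univ := mem_singleton.1 (Finpartition.parts_top_subset _ hW)
  rw [min'_eq_lo hne, max'_eq_hi hne, lo_eq_zero (mem_univ 0), hi_eq_last (mem_univ _)]
  refine ⟨(ofBlocks π 𝔙).mem_part (mem_univ 0), mem_ofBlocks_part.2 ?_⟩
  rw [innermost_eq_of_mem hπ hVo h𝔙 h0, innermost_eq_of_mem hπ hVo h𝔙 hlast]

def specialBlocks (π ρ : Finpartition (univ : Finset (Fin (n + 1)))) :
    Set (Finset (Fin (n + 1))) :=
  {V | V ∈ π.parts ∧ IsSpecial ρ V}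

lemma specialBlocks_ofBlocks (hπ : IsNC π) (hcov : ∀ x, (covers π 𝔙 x).Nonempty)
    (h𝔙 : 𝔙 ⊆ π.parts) : specialBlocks π (ofBlocks π 𝔙) = 𝔙 := by
  ext V
  refine ⟨fun ⟨hV, hsp⟩ => ?_, fun hV => ⟨h𝔙 hV, ?_⟩⟩
  · obtain ⟨W, hW, hlo, -⟩ := (isSpecial_iff (π.nonempty_of_mem_parts hV)).1 hsp
    obtain ⟨x, -, rfl⟩ := (ofBlocks π 𝔙).part_surjOn hW
    rw [(lo_inj hV (innermost_mem_parts (hcov x))).1 (hlo.trans (lo_ofBlocks_part hπ hcov x))]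
    exact innermost_mem (hcov x)
  · have hVne := π.nonempty_of_mem_parts (h𝔙 hV)
    have hC : innermost π 𝔙 (lo V) = V := innermost_eq_of_mem hπ (h𝔙 hV) hV (lo_mem hVne)
    refine (isSpecial_iff hVne).2 ⟨_, (ofBlocks π 𝔙).part_mem.2 (mem_univ (lo V)), ?_, ?_⟩
    · rw [lo_ofBlocks_part hπ hcov, hC]
    · rw [hi_ofBlocks_part hπ hcov, hC]

lemma outer_mem_specialBlocks (h : Ll π ρ) {Vo : Finset (Fin (n + 1))} (hVo : Vo ∈ π.parts)
    (h0 : 0 ∈ Vo) (hlast : Fin.last n ∈ Vo) : Vo ∈ specialBlocks π ρ := by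
  obtain ⟨W, hW, hVoW⟩ := h.1 hVo
  refine ⟨hVo, (isSpecial_iff ⟨0, h0⟩).2 ⟨W, hW, ?_, ?_⟩⟩
  · rw [lo_eq_zero h0, lo_eq_zero (hVoW h0)]
  · rw [hi_eq_last hlast, hi_eq_last (hVoW hlast)]

lemma exists_lo_eq_hi_eq_of_ll (h : Ll π ρ) (hW : W ∈ ρ.parts) :
    ∃ U ∈ π.parts, lo U = lo W ∧ hi U = hi W := by
  have hWne := ρ.nonempty_of_mem_parts hW
  obtain ⟨U, hU, hmm⟩ := h.2 W hW
  obtain ⟨hlo, hhi⟩ := hmm hWne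
  rw [min'_eq_lo hWne] at hlo
  rw [max'_eq_hi hWne] at hhi
  have hUne : U.Nonempty := ⟨_, hlo⟩
  obtain ⟨W', hW', hUW'⟩ := h.1 hU
  obtain rfl : W' = W := ρ.eq_of_mem_parts hW' hW (hUW' hlo) (lo_mem hWne)
  exact ⟨U, hU, le_antisymm (lo_le hlo) (lo_le (hUW' (lo_mem hUne))),
    le_antisymm (le_hi (hUW' (hi_mem hUne))) (le_hi hhi)⟩

lemma exists_mem_covers_specialBlocks (h : Ll π ρ) (x : Fin (n + 1)) :
    ∃ U ∈ covers π (specialBlocks π ρ) x, lo U = lo (ρ.part x) := by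
  have hxW : x ∈ ρ.part x := ρ.mem_part (mem_univ x)
  obtain ⟨U, hU, hlo, hhi⟩ := exists_lo_eq_hi_eq_of_ll h (ρ.part_mem.2 (mem_univ x))
  refine ⟨U, mem_covers.2 ⟨hU, ⟨hU, ?_⟩, ?_⟩, hlo⟩
  · exact (isSpecial_iff (π.nonempty_of_mem_parts hU)).2
      ⟨_, ρ.part_mem.2 (mem_univ x), hlo, hhi⟩
  · rw [Spans, hlo, hhi]
    exact spans_of_mem hxW

/-- If the block `W'` of `ρ` with the span of the innermost special block were not `ρ.part x`,
it would enclose `ρ.part x`, whose span is that of another special block spanning `x`. -/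
lemma lo_innermost_specialBlocks (hπ : IsNC π) (hρ : IsNC ρ) (h : Ll π ρ) (x : Fin (n + 1)) :
    lo (innermost π (specialBlocks π ρ) x) = lo (ρ.part x) := by
  have hW : ρ.part x ∈ ρ.parts := ρ.part_mem.2 (mem_univ x)
  have hxW : x ∈ ρ.part x := ρ.mem_part (mem_univ x)
  obtain ⟨U, hUc, hlo⟩ := exists_mem_covers_specialBlocks h x
  obtain ⟨hCp, ⟨-, hCsp⟩, hxC⟩ := mem_covers.1 (innermost_mem_covers ⟨U, hUc⟩)
  obtain ⟨W', hW', hloW', hhiW'⟩ := (isSpecial_iff (π.nonempty_of_mem_parts hCp)).1 hCsp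
  suffices W' = ρ.part x by rw [hloW', this]
  by_contra hne
  have hWW' : Encloses W' (ρ.part x) := encloses_of_mem_of_spans hρ hW hW' (Ne.symm hne) hxW
    (by rw [Spans, ← hloW', ← hhiW']; exact hxC)
  refine hne ((lo_inj hW' hW).1 (le_antisymm hWW'.1 ?_))
  rw [← hlo, ← hloW']
  exact (encloses_innermost hπ hUc).1

lemma ofBlocks_specialBlocks (hπ : IsNC π) (hρ : IsNC ρ) (h : Ll π ρ) :
    ofBlocks π (specialBlocks π ρ) = ρ := by
  have hC (x : Fin (n + 1)) : innermost π (specialBlocks π ρ) x ∈ π.parts := by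
    obtain ⟨U, hU, -⟩ := exists_mem_covers_specialBlocks h x
    exact innermost_mem_parts ⟨U, hU⟩
  refine Finpartition.eq_of_part_eq_part_iff fun x _ y _ => ?_
  rw [ofBlocks_part_eq_part_iff, ← lo_inj (hC x) (hC y), ← lo_inj (ρ.part_mem.2 (mem_univ x))
    (ρ.part_mem.2 (mem_univ y)), lo_innermost_specialBlocks hπ hρ h,
    lo_innermost_specialBlocks hπ hρ h]

end NCPartition

open NCPartition in
theorem special_blocks_bijection_general (n : ℕ)
    (π : Finpartition (Finset.univ : Finset (Fin (n + 1)))) (hπ : IsNC π)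
    (Vo : Finset (Fin (n + 1))) (hVo : Vo ∈ π.parts)
    (h0 : (0 : Fin (n + 1)) ∈ Vo) (hlast : Fin.last n ∈ Vo) :
    Set.BijOn
      (fun ρ : Finpartition (Finset.univ : Finset (Fin (n + 1))) =>
        {V : Finset (Fin (n + 1)) | V ∈ π.parts ∧ IsSpecial ρ V})
      {ρ | IsNC ρ ∧ Ll π ρ ∧ Ll ρ ⊤}
      {𝔙 : Set (Finset (Fin (n + 1))) | 𝔙 ⊆ ↑π.parts ∧ Vo ∈ 𝔙} := by
  have hcov {𝔙 : Set (Finset (Fin (n + 1)))} (h𝔙 : Vo ∈ 𝔙) : ∀ x, (covers π 𝔙 x).Nonempty :=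
    covers_nonempty_of_outer hVo h𝔙 h0 hlast
  refine Set.InvOn.bijOn (f' := ofBlocks π) ⟨?_, ?_⟩ ?_ ?_
  · rintro ρ ⟨hρ, hπρ, -⟩
    exact ofBlocks_specialBlocks hπ hρ hπρ
  · rintro 𝔙 ⟨h𝔙, hVo𝔙⟩
    exact specialBlocks_ofBlocks hπ (hcov hVo𝔙) h𝔙
  · rintro ρ ⟨-, hπρ, -⟩
    exact ⟨fun V hV => hV.1, outer_mem_specialBlocks hπρ hVo h0 hlast⟩
  · rintro 𝔙 ⟨-, hVo𝔙⟩
    exact ⟨isNC_ofBlocks hπ (hcov hVo𝔙), ll_ofBlocks hπ (hcov hVo𝔙),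
      ll_top_ofBlocks hπ hVo hVo𝔙 h0 hlast⟩

/-- For `π ∈ NC(n)` with `π ≪ 1ₙ` and unique outer block `V_o`, the map
`ρ ↦ {V ∈ π : V is ρ-special}` is a bijection from `{ρ ∈ NC(n) : π ≪ ρ ≪ 1ₙ}` onto the
collection of subsets `𝔙` of the blocks of `π` with `V_o ∈ 𝔙`. -/
theorem special_blocks_bijection (n : ℕ)
    (π : Finpartition (Finset.univ : Finset (Fin (n + 1)))) (hπ : IsNC π)
    (hπ1 : Ll π ⊤) (Vo : Finset (Fin (n + 1))) (hVo : Vo ∈ π.parts)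
    (h0 : (0 : Fin (n + 1)) ∈ Vo) (hlast : Fin.last n ∈ Vo) :
    Set.BijOn
      (fun ρ : Finpartition (Finset.univ : Finset (Fin (n + 1))) =>
        {V : Finset (Fin (n + 1)) | V ∈ π.parts ∧ IsSpecial ρ V})
      {ρ | IsNC ρ ∧ Ll π ρ ∧ Ll ρ ⊤}
      {𝔙 : Set (Finset (Fin (n + 1))) | 𝔙 ⊆ ↑π.parts ∧ Vo ∈ 𝔙} :=
  special_blocks_bijection_general n π hπ Vo hVo h0 hlast
end

section
/- Let B be a unital C*-algebra, μ ∈ Σ(B) a positive B-valued distribution, and α : B → B of the form α[b] = (1+e) b (1+e*) for some e ∈ B. Suppose Y and Q are Boolean independent over B in a B-valued probability space (M, E) with M = B ⊕ M_0, Y = Y* ∈ M_0 has moment series equal to the B-transform of μ (M_Y = B_μ), E(Q) = e, and Var_Q(b) := E((1+Q*)b(1+Q)) − E(1+Q*)bE(1+Q) = b for all b ∈ B. Then T = (1+Q) Y (1+Q*) has distribution μ^{⊎α}; in particular, B_T^[n](b_1,…,b_{n−1}) = (1+e) B_μ^[n](b_1,…,b_{n−1}) (1+e*) for all n. -/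
/-! An operator model for Boolean convolution powers `μ^{⊎α}` with
`α[b] = (1+e) b (1+e*)`. -/

/-- All compositions of `n` (ordered lists of positive integers summing to `n`). -/
def comps : ℕ → List (List ℕ)
  | 0 => [[]]
  | n + 1 =>
      (List.range (n + 1)).flatMap fun s =>
        (comps (n - s)).map fun rest => (s + 1) :: rest
  decreasing_by omega

section Defs

variable {B : Type*} [Ring B]

/-- For a composition `[m_1,…,m_k]` of `n`, a Boolean cumulant function `f` and a list
`[b_1,…,b_{n-1}]`, the product `f(b_1,…,b_{m_1−1}) b_{m_1} f(b_{m_1+1},…) ⋯`; the moment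
`M_μ^[n]` is the sum of these over all compositions of `n` (equivalently over all interval
partitions `Int(n)`), which is how the `B`-transform `B_μ = f` is defined. -/
def termOfC (f : List B → B) : List ℕ → List B → B
  | [], _ => 1
  | [m], l => f (l.take (m - 1))
  | m :: m' :: rest, l =>
      f (l.take (m - 1)) * l.getD (m - 1) 1 * termOfC f (m' :: rest) (l.drop m)

/-- The moments determined by a Boolean cumulant function `f` (`f` applied to the empty list
is the first Boolean cumulant `B^[1]`): `M^[n] = Σ_{π ∈ Int(n)} B^[π]`. -/
def boolMom (f : List B → B) (l : List B) : B :=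
  ((comps (l.length + 1)).map fun c => termOfC f c l).sum

variable {M : Type*} [Ring M] [Algebra ℂ M]

/-- The word `x b_1 x b_2 ⋯ x b_{n-1} x` in a noncommutative probability space. -/
def word (ι : B → M) (x : M) : List B → M
  | [] => x
  | b :: r => x * ι b * word ι x r

end Defs

/-- The `*`- and `B`-bimodule-closed generating set determined by an element `x`:
`{ι(b) x ι(b'), ι(b) x* ι(b')}`. -/
def genS {B M : Type*} [Ring B] [Ring M] [Algebra ℂ B] [Algebra ℂ M] [StarRing B] [StarRing M]
    (ι : B →⋆ₐ[ℂ] M) (x : M) : Set M :=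
  {m | ∃ b b' : B, m = ι b * x * ι b' ∨ m = ι b * star x * ι b'}

/-! Conjugating by `1 + Q` turns each `b` between the `Y`'s into `b + R b` with
`R b = (1 + Q*) b (1 + Q) - b` in the algebra of `Q`; expanding, every term is an alternating
product of moments of `Y` and copies of `R`, which Boolean independence factorizes, and
`E(R b) = (1 + e*) b (1 + e)` regroups the result into the Boolean moment formula for
`(1 + e) B_μ (1 + e*)`. -/

theorem exists_eq_succ_cons_of_mem_comps {n : ℕ} {c : List ℕ} (hc : c ∈ comps (n + 1)) :
    ∃ s rest, c = (s + 1) :: rest := by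
  rw [comps] at hc
  simp only [List.mem_flatMap, List.mem_map] at hc
  obtain ⟨s, -, rest, -, rfl⟩ := hc
  exact ⟨s, rest, rfl⟩

theorem comps_succ_succ (n : ℕ) :
    comps (n + 2) =
      (comps (n + 1)).map (1 :: ·) ++ (comps (n + 1)).map (List.modifyHead (· + 1)) := by
  conv_lhs => rw [comps, List.range_succ_eq_map, List.flatMap_cons, List.flatMap_map]
  congr 1
  rw [comps.eq_2 n, List.map_flatMap]
  refine List.flatMap_congr fun s _ => ?_
  rw [List.map_map, Nat.add_sub_add_right]
  rfl

section BlockList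

variable {B α : Type*} [One B]

/-- For a composition `[m_1, …, m_k]` of `l.length + 1`, the list
`f(b_1,…,b_{m_1−1}), g(b_{m_1}), f(b_{m_1+1},…), …`: the blocks of the interval partition
alternate with the separating letters. -/
def blockList (f : List B → α) (g : B → α) : List ℕ → List B → List α
  | [], _ => []
  | [m], l => [f (l.take (m - 1))]
  | m :: m' :: rest, l =>
      f (l.take (m - 1)) :: g (l.getD (m - 1) 1) :: blockList f g (m' :: rest) (l.drop m)

theorem blockList_map {β : Type*} (h : α → β) (f : List B → α) (g : B → α) :
    ∀ (c : List ℕ) (l : List B),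
      (blockList f g c l).map h = blockList (h ∘ f) (h ∘ g) c l
  | [], _ => rfl
  | [_], _ => rfl
  | m :: m' :: rest, l => by
      simp only [blockList, List.map_cons, blockList_map h f g (m' :: rest), Function.comp]

theorem isChain_cons_blockList_append {R : α → α → Prop} {f : List B → α} {g : B → α}
    (hfg : ∀ w b, R (f w) (g b)) (hgf : ∀ b w, R (g b) (f w)) {z z' : α}
    (hz : ∀ w, R z (f w)) (hz' : ∀ w, R (f w) z') :
    ∀ {c : List ℕ} (l : List B), c ≠ [] → (z :: (blockList f g c l ++ [z'])).IsChain R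
  | [], _, hc => absurd rfl hc
  | [_], _, _ => by simp [blockList, hz, hz']
  | m :: m' :: rest, l, _ => by
      simp only [blockList, List.cons_append, List.isChain_cons_cons]
      exact ⟨hz _, hfg _ _,
        isChain_cons_blockList_append hfg hgf (hgf _) hz' (l.drop m) (List.cons_ne_nil _ _)⟩

theorem forall_mem_blockList {P : α → Prop} {f : List B → α} {g : B → α}
    (hf : ∀ w, P (f w)) (hg : ∀ b, P (g b)) :
    ∀ (c : List ℕ) (l : List B), ∀ p ∈ blockList f g c l, P p
  | [], _, _, hp => by simp [blockList] at hp
  | [_], _, _, hp => by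
      rw [blockList, List.mem_singleton] at hp
      exact hp ▸ hf _
  | m :: m' :: rest, l, p, hp => by
      simp only [blockList, List.mem_cons] at hp
      rcases hp with rfl | rfl | hp
      exacts [hf _, hg _, forall_mem_blockList hf hg (m' :: rest) (l.drop m) p hp]

end BlockList

theorem termOfC_mul_mul {B : Type*} [Ring B] (f : List B → B) (a a' : B) :
    ∀ {c : List ℕ} (l : List B), c ≠ [] →
      termOfC (fun w => a * f w * a') c l = a * (blockList f (fun b => a' * b * a) c l).prod * a'
  | [], _, hc => absurd rfl hc
  | [_], _, _ => by simp [termOfC, blockList]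
  | m :: m' :: rest, l, _ => by
      rw [termOfC, termOfC_mul_mul f a a' (l.drop m) (List.cons_ne_nil _ _)]
      simp only [blockList, List.prod_cons, mul_assoc]

section Word

variable {B M : Type*} [Ring M]

theorem word_mul_mul (φ : B → M) (a x a' : M) (l : List B) :
    word φ (a * x * a') l = a * word (fun b => a' * φ b * a) x l * a' := by
  induction l with
  | nil => rfl
  | cons b r ih => rw [word, word, ih]; simp only [mul_assoc]

end Word

section Expansion

variable {B M : Type*} [One B] [Ring M] (φ ψ : B → M) (x : M)

theorem prod_blockList_one_cons_cons (m' : ℕ) (c : List ℕ) (b : B) (r : List B) :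
    (blockList (word φ x) ψ (1 :: m' :: c) (b :: r)).prod =
      x * ψ b * (blockList (word φ x) ψ (m' :: c) r).prod := by
  simp only [blockList, List.prod_cons, Nat.sub_self, List.take_zero, List.getD_cons_zero,
    List.drop_succ_cons, List.drop_zero, word, mul_assoc]

theorem prod_blockList_add_two_cons (s : ℕ) (c : List ℕ) (b : B) (r : List B) :
    (blockList (word φ x) ψ ((s + 2) :: c) (b :: r)).prod =
      x * φ b * (blockList (word φ x) ψ ((s + 1) :: c) r).prod := by
  cases c with
  | nil => simp [blockList, word]
  | cons m' rest =>
      simp only [blockList, List.prod_cons, show s + 2 - 1 = s + 1 by omega, Nat.add_sub_cancel,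
        List.take_succ_cons, List.getD_cons_succ, List.drop_succ_cons, word, mul_assoc]

/-- Expanding `x (φ b_1 + ψ b_1) x ⋯ x` by choosing `φ` or `ψ` at each slot: the slots where `ψ`
is chosen cut `l` into the blocks of a composition. -/
theorem word_add_eq_sum_comps (l : List B) :
    word (fun b => φ b + ψ b) x l =
      ((comps (l.length + 1)).map fun c => (blockList (word φ x) ψ c l).prod).sum := by
  induction l with
  | nil => simp [comps, blockList, word]
  | cons b r ih =>
      have hψ : ((comps (r.length + 1)).map fun c =>
          (blockList (word φ x) ψ (1 :: c) (b :: r)).prod) =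
          (comps (r.length + 1)).map fun c => x * ψ b * (blockList (word φ x) ψ c r).prod := by
        refine List.map_congr_left fun c hc => ?_
        obtain ⟨s, rest, rfl⟩ := exists_eq_succ_cons_of_mem_comps hc
        exact prod_blockList_one_cons_cons φ ψ x _ _ b r
      have hφ : ((comps (r.length + 1)).map fun c =>
          (blockList (word φ x) ψ (c.modifyHead (· + 1)) (b :: r)).prod) =
          (comps (r.length + 1)).map fun c => x * φ b * (blockList (word φ x) ψ c r).prod := by
        refine List.map_congr_left fun c hc => ?_
        obtain ⟨s, rest, rfl⟩ := exists_eq_succ_cons_of_mem_comps hc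
        exact prod_blockList_add_two_cons φ ψ x _ _ b r
      rw [List.length_cons, comps_succ_succ, List.map_append, List.map_map, List.map_map,
        List.sum_append]
      simp only [Function.comp_def]
      rw [hψ, hφ, List.sum_map_mul_left, List.sum_map_mul_left, ← ih, word]
      noncomm_ring

end Expansion

section Boolean

variable {B M : Type*} [Ring B] [Module ℂ B] [Ring M] [Algebra ℂ M]

/-- The tag of a factor records whether it is taken from `A₁` (`true`) or `A₂` (`false`). -/
def IsBooleanIndep (E : M →ₗ[ℂ] B) (A₁ A₂ : NonUnitalSubalgebra ℂ M) : Prop :=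
  ∀ xs : List (M × Bool), (∀ p ∈ xs, p.1 ∈ if p.2 then A₁ else A₂) →
    xs.IsChain (fun p q => p.2 ≠ q.2) → E (xs.map Prod.fst).prod = (xs.map fun p => E p.1).prod

variable {E : M →ₗ[ℂ] B} {A₁ A₂ : NonUnitalSubalgebra ℂ M}

theorem IsBooleanIndep.map_one_add_mul_prod_mul_one_add (hE : IsBooleanIndep E A₁ A₂)
    {xs : List (M × Bool)} (hxs : ∀ p ∈ xs, p.1 ∈ if p.2 then A₁ else A₂) {q q' : M}
    (hq : q ∈ A₂) (hq' : q' ∈ A₂)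
    (hchain : ((q, false) :: (xs ++ [(q', false)])).IsChain fun p p' => p.2 ≠ p'.2) :
    E ((1 + q) * (xs.map Prod.fst).prod * (1 + q')) =
      (1 + E q) * (xs.map fun p => E p.1).prod * (1 + E q') := by
  have hmem : ∀ p ∈ (q, false) :: (xs ++ [(q', false)]), p.1 ∈ if p.2 then A₁ else A₂ := by
    simp only [List.mem_cons, List.mem_append, List.not_mem_nil, or_false]
    rintro p (rfl | hp | rfl)
    exacts [hq, hxs p hp, hq']
  have hsub {ys} (hys : ys <:+: (q, false) :: (xs ++ [(q', false)])) :=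
    hE ys (fun p hp => hmem p (hys.subset hp)) (hchain.infix hys)
  have h₀ := hsub (ys := xs) ⟨[(q, false)], [(q', false)], rfl⟩
  have h₁ := hsub (ys := (q, false) :: xs) ⟨[], [(q', false)], rfl⟩
  have h₂ := hsub (ys := xs ++ [(q', false)]) ⟨[(q, false)], [], List.append_nil _⟩
  have h₃ := hsub List.infix_rfl
  simp only [List.map_cons, List.map_append, List.map_nil, List.prod_cons, List.prod_append,
    List.prod_nil, mul_one, ← mul_assoc] at h₁ h₂ h₃
  have expand : (1 + q) * (xs.map Prod.fst).prod * (1 + q') = (xs.map Prod.fst).prod +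
      q * (xs.map Prod.fst).prod + (xs.map Prod.fst).prod * q' +
      q * (xs.map Prod.fst).prod * q' := by
    noncomm_ring
  rw [expand, map_add, map_add, map_add, h₀, h₁, h₂, h₃]
  noncomm_ring

theorem IsBooleanIndep.map_one_add_mul_prod_blockList_mul_one_add {β : Type*} [One β]
    (hE : IsBooleanIndep E A₁ A₂) {f : List β → M} {g : β → M} (hf : ∀ w, f w ∈ A₁)
    (hg : ∀ b, g b ∈ A₂) {q q' : M} (hq : q ∈ A₂) (hq' : q' ∈ A₂) {c : List ℕ} (l : List β)
    (hc : c ≠ []) :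
    E ((1 + q) * (blockList f g c l).prod * (1 + q')) =
      (1 + E q) * (blockList (E ∘ f) (E ∘ g) c l).prod * (1 + E q') := by
  have key := hE.map_one_add_mul_prod_mul_one_add
    (xs := blockList (fun w => (f w, true)) (fun b => (g b, false)) c l)
    (forall_mem_blockList (by simpa using hf) (by simpa using hg) c l) hq hq'
    (isChain_cons_blockList_append (by simp) (by simp) (by simp) (by simp) l hc)
  rwa [blockList_map, blockList_map] at key

end Boolean

section GenS

variable {B M : Type*} [Ring B] [Ring M] [Algebra ℂ B] [Algebra ℂ M] [StarRing B] [StarRing M]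
  (ι : B →⋆ₐ[ℂ] M)

theorem mul_mul_mem_adjoin_genS (x : M) (b b' : B) :
    ι b * x * ι b' ∈ NonUnitalAlgebra.adjoin ℂ (genS ι x) :=
  NonUnitalAlgebra.subset_adjoin ℂ ⟨b, b', Or.inl rfl⟩

theorem mul_star_mul_mem_adjoin_genS (x : M) (b b' : B) :
    ι b * star x * ι b' ∈ NonUnitalAlgebra.adjoin ℂ (genS ι x) :=
  NonUnitalAlgebra.subset_adjoin ℂ ⟨b, b', Or.inr rfl⟩

theorem self_mem_adjoin_genS (x : M) : x ∈ NonUnitalAlgebra.adjoin ℂ (genS ι x) := by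
  simpa using mul_mul_mem_adjoin_genS ι x 1 1

theorem star_mem_adjoin_genS (x : M) : star x ∈ NonUnitalAlgebra.adjoin ℂ (genS ι x) := by
  simpa using mul_star_mul_mem_adjoin_genS ι x 1 1

theorem word_mem_adjoin_genS (x : M) (l : List B) :
    word (fun b => ι b) x l ∈ NonUnitalAlgebra.adjoin ℂ (genS ι x) := by
  induction l with
  | nil => exact self_mem_adjoin_genS ι x
  | cons b r ih => exact mul_mem (by simpa using mul_mul_mem_adjoin_genS ι x 1 b) ih

theorem one_add_star_mul_mul_one_add_sub_mem_adjoin_genS (x : M) (b : B) :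
    (1 + star x) * ι b * (1 + x) - ι b ∈ NonUnitalAlgebra.adjoin ℂ (genS ι x) := by
  rw [show (1 + star x) * ι b * (1 + x) - ι b = star x * ι b + ι b * x + star x * ι b * x by
    noncomm_ring]
  have hstar : star x * ι b ∈ NonUnitalAlgebra.adjoin ℂ (genS ι x) := by
    simpa using mul_star_mul_mem_adjoin_genS ι x 1 b
  have hself : ι b * x ∈ NonUnitalAlgebra.adjoin ℂ (genS ι x) := by
    simpa using mul_mul_mem_adjoin_genS ι x b 1
  exact add_mem (add_mem hstar hself) (mul_mem hstar (self_mem_adjoin_genS ι x))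

end GenS

theorem boolean_power_operator_model_general
    (B M : Type*)
    [NormedRing B] [StarRing B] [NormedAlgebra ℂ B]
    [NormedRing M] [StarRing M] [NormedAlgebra ℂ M]
    (ι : B →⋆ₐ[ℂ] M) (E : M →ₗ[ℂ] B)
    (hEι : ∀ b : B, E (ι b) = b)
    (hEstar : ∀ m : M, E (star m) = star (E m))
    (Y Q : M) (e : B)
    (hBool : ∀ xs : List (M × Bool),
      (∀ p ∈ xs, p.1 ∈
        (if p.2 then NonUnitalAlgebra.adjoin ℂ (genS ι Y)
          else NonUnitalAlgebra.adjoin ℂ (genS ι Q))) →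
      List.Chain' (fun p q => p.2 ≠ q.2) xs →
      E (xs.map Prod.fst).prod = ((xs.map fun p => E p.1).prod))
    (Bf : List B → B)
    (hYmom : ∀ l : List B, E (word (fun b => ι b) Y l) = Bf l)
    (hQe : E Q = e)
    (hVar : ∀ b : B, E ((1 + star Q) * ι b * (1 + Q)) = b + (1 + star e) * b * (1 + e)) :
    ∀ l : List B,
      E (word (fun b => ι b) ((1 + Q) * Y * (1 + star Q)) l) =
        boolMom (fun l' => (1 + e) * Bf l' * (1 + star e)) l := by
  intro l
  set R : B → M := fun b => (1 + star Q) * ι b * (1 + Q) - ι b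
  have hconj : (fun b => (1 + star Q) * ι b * (1 + Q)) = fun b => ι b + R b :=
    funext fun b => (add_sub_cancel _ _).symm
  have hER : E ∘ R = fun b => (1 + star e) * b * (1 + e) :=
    funext fun b => by simp only [R, Function.comp, map_sub, hVar, hEι, add_sub_cancel_left]
  have hEword : E ∘ word (fun b => ι b) Y = Bf := funext hYmom
  have hBool' : IsBooleanIndep E (NonUnitalAlgebra.adjoin ℂ (genS ι Y))
      (NonUnitalAlgebra.adjoin ℂ (genS ι Q)) := hBool
  rw [word_mul_mul, hconj, word_add_eq_sum_comps, ← List.sum_map_mul_left,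
    ← List.sum_map_mul_right, map_list_sum, List.map_map, boolMom]
  refine congrArg List.sum (List.map_congr_left fun c hc => ?_)
  obtain ⟨s, rest, rfl⟩ := exists_eq_succ_cons_of_mem_comps hc
  rw [Function.comp_apply, hBool'.map_one_add_mul_prod_blockList_mul_one_add
    (word_mem_adjoin_genS ι Y) (one_add_star_mul_mul_one_add_sub_mem_adjoin_genS ι Q)
    (self_mem_adjoin_genS ι Q) (star_mem_adjoin_genS ι Q) l (List.cons_ne_nil _ _),
    hEword, hER, hEstar, hQe, termOfC_mul_mul _ _ _ l (List.cons_ne_nil _ _)]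

/-- Let `(M, E)` be a `B`-valued C*-probability space, `μ ∈ Σ(B)` a positive `B`-valued
distribution with `B`-transform `Bf`, and `α : B → B` the completely positive map
`α[b] = (1+e) b (1+e*)`.  Suppose `Y = Y*` and `Q` are Boolean independent over `B`
(the non-unital `*`-subalgebras over `B` they generate satisfy the Boolean factorization
property for alternating words), with `M_Y = B_μ` (i.e. `E[Y b_1 Y ⋯ Y] = Bf [b_1,…]`),
`E(Q) = e` and `Var_Q(b) = E((1+Q*) b (1+Q)) − E(1+Q*) b E(1+Q) = b`.  Then
`T = (1+Q) Y (1+Q*)` has distribution `μ^{⊎α}`; in particular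
`B_T^[n](b_1,…,b_{n−1}) = (1+e) B_μ^[n](b_1,…,b_{n−1}) (1+e*)` for all `n`, i.e. the moments
of `T` are the Boolean-cumulant-to-moment sums of `(1+e) Bf (1+e*)`. -/
theorem boolean_power_operator_model
    (B M : Type*)
    [NormedRing B] [StarRing B] [CStarRing B] [NormedAlgebra ℂ B]
    [PartialOrder B] [StarOrderedRing B]
    [NormedRing M] [StarRing M] [CStarRing M] [NormedAlgebra ℂ M]
    (ι : B →⋆ₐ[ℂ] M) (E : M →ₗ[ℂ] B)
    (hEι : ∀ b : B, E (ι b) = b)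
    (hEbimod : ∀ (b b' : B) (m : M), E (ι b * m * ι b') = b * E m * b')
    (hEpos : ∀ m : M, 0 ≤ E (star m * m))
    (hEstar : ∀ m : M, E (star m) = star (E m))
    (Y Q : M) (e : B)
    (hY : star Y = Y)
    (hBool : ∀ xs : List (M × Bool),
      (∀ p ∈ xs, p.1 ∈
        (if p.2 then NonUnitalAlgebra.adjoin ℂ (genS ι Y)
          else NonUnitalAlgebra.adjoin ℂ (genS ι Q))) →
      List.Chain' (fun p q => p.2 ≠ q.2) xs →
      E (xs.map Prod.fst).prod = ((xs.map fun p => E p.1).prod))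
    (Bf : List B → B)
    (hμpos : ∀ (k : ℕ) (P : Fin k → List B) (c : Fin k → B),
      0 ≤ ∑ i : Fin k, ∑ j : Fin k,
        star (c i) * boolMom Bf (((P i).map star).reverse ++ (1 : B) :: (P j)) * c j)
    (hYmom : ∀ l : List B, E (word (fun b => ι b) Y l) = Bf l)
    (hQe : E Q = e)
    (hVar : ∀ b : B, E ((1 + star Q) * ι b * (1 + Q)) = b + (1 + star e) * b * (1 + e)) :
    ∀ l : List B,
      E (word (fun b => ι b) ((1 + Q) * Y * (1 + star Q)) l) =
        boolMom (fun l' => (1 + e) * Bf l' * (1 + star e)) l :=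
  boolean_power_operator_model_general B M ι E hEι hEstar Y Q e hBool Bf hYmom hQe hVar
end
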